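/- For every X₀ ∈ V and r > 0, and for all X, Y ∈ V with ‖X − X₀‖ ≤ r and ‖Y − X₀‖ ≤ r, one has d_Gram(X,Y)² ≤ 2(‖X₀‖ + r)·d_H(X,Y); equivalently, ‖XᵀX − YᵀY‖ ≤ 2(‖X₀‖ + r)·min_{Q∈H} ‖X − Q·Y‖. -/

import Mathlib

open scoped BigOperators
open Matrix

namespace GPR

variable {L : ℕ} {N R : Fin L → ℕ}

/-- The signal space: `L`-tuples of real `N ℓ × R ℓ` matrices. -/
abbrev V (N R : Fin L → ℕ) := ∀ ℓ : Fin L, Matrix (Fin (N ℓ)) (Fin (R ℓ)) ℝ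

/-- Frobenius norm of a tuple of matrices: `(Σ_ℓ Σ_{i,j} (X_ℓ)_{ij}²)^{1/2}`. -/
noncomputable def fnorm {m n : Fin L → ℕ} (X : ∀ ℓ : Fin L, Matrix (Fin (m ℓ)) (Fin (n ℓ)) ℝ) : ℝ :=
  Real.sqrt (∑ ℓ, ∑ i, ∑ j, (X ℓ i j) ^ 2)

/-- The group `H = ∏_ℓ O(N ℓ)`, as tuples of orthogonal matrices. -/
abbrev HGroup (N : Fin L → ℕ) := ∀ ℓ : Fin L, Matrix.orthogonalGroup (Fin (N ℓ)) ℝ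

/-- The action of `H` on `V`: `(Q · X)_ℓ = Q_ℓ X_ℓ`. -/
def act (Q : HGroup N) (X : V N R) : V N R :=
  fun ℓ => (Q ℓ : Matrix (Fin (N ℓ)) (Fin (N ℓ)) ℝ) * X ℓ

/-- `d_σ(X,Y) = min(‖X−Y‖, ‖X+Y‖)`. -/
noncomputable def dSigma (X Y : V N R) : ℝ := min (fnorm (X - Y)) (fnorm (X + Y))

/-- `d_H(X,Y) = min_{Q ∈ H} ‖X − Q·Y‖`. -/
noncomputable def dH (X Y : V N R) : ℝ := ⨅ Q : HGroup N, fnorm (X - act Q Y)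

/-- The positive semidefinite square root `√(XᵀX)` of the Gram matrix of a single matrix. -/
noncomputable def gramSqrt {n d : ℕ} (X : Matrix (Fin n) (Fin d) ℝ) : Matrix (Fin d) (Fin d) ℝ :=
  ((Matrix.posSemidef_conjTranspose_mul_self X).1.eigenvectorUnitary : Matrix (Fin d) (Fin d) ℝ) *
    Matrix.diagonal (fun i => ((Real.sqrt ((Matrix.posSemidef_conjTranspose_mul_self X).1.eigenvalues i) : ℝ) : ℝ)) *
    (star (Matrix.posSemidef_conjTranspose_mul_self X).1.eigenvectorUnitary : Matrix (Fin d) (Fin d) ℝ)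

/-- The tuple `√(XᵀX) = (√(X₁ᵀX₁), …, √(X_LᵀX_L))`. -/
noncomputable def sqrtGram (X : V N R) : ∀ ℓ : Fin L, Matrix (Fin (R ℓ)) (Fin (R ℓ)) ℝ :=
  fun ℓ => gramSqrt (X ℓ)

/-- The second moment: tuple of Gram matrices `XᵀX = (X₁ᵀX₁, …, X_LᵀX_L)`. -/
def gram (X : V N R) : ∀ ℓ : Fin L, Matrix (Fin (R ℓ)) (Fin (R ℓ)) ℝ :=
  fun ℓ => (X ℓ)ᵀ * X ℓ

/-- A set `S ⊆ V` is transverse to the orbits of `H` if whenever `X ∈ S` and `Q·X ∈ S`,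
one has `Q·X = X` or `Q·X = −X`. -/
def Transverse (S : Set (V N R)) : Prop :=
  ∀ X ∈ S, ∀ Q : HGroup N, act Q X ∈ S → act Q X = X ∨ act Q X = -X

/-!
For every `Q ∈ H` we have `YᵀY = (Q·Y)ᵀ(Q·Y)` and `‖Q·Y‖ = ‖Y‖`, while the identity
`XᵀX − ZᵀZ = Xᵀ(X − Z) + (X − Z)ᵀZ` and submultiplicativity of the Frobenius norm give
`‖XᵀX − ZᵀZ‖ ≤ (‖X‖ + ‖Z‖)‖X − Z‖`. With `Z = Q·Y`, and `‖X‖, ‖Y‖ ≤ ‖X₀‖ + r`, minimizing over `Q`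
gives the bound.
-/

attribute [local instance] Matrix.frobeniusNormedAddCommGroup

section Frobenius

variable {m n : Type*} [Fintype m] [Fintype n]

theorem frobenius_norm_sq_eq_sum_sq (A : Matrix m n ℝ) : ‖A‖ ^ 2 = ∑ i, ∑ j, A i j ^ 2 := by
  rw [frobenius_norm_def, ← Real.rpow_natCast, ← Real.rpow_mul (by positivity)]
  norm_num

theorem frobenius_norm_sq_eq_trace (A : Matrix m n ℝ) : ‖A‖ ^ 2 = trace (Aᵀ * A) := by
  rw [frobenius_norm_sq_eq_sum_sq, Finset.sum_comm]
  simp [trace, mul_apply, sq]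

theorem frobenius_norm_transpose_mul_self_sub_le (A B : Matrix m n ℝ) :
    ‖Aᵀ * A - Bᵀ * B‖ ≤ (‖A‖ + ‖B‖) * ‖A - B‖ :=
  calc ‖Aᵀ * A - Bᵀ * B‖ = ‖Aᵀ * (A - B) + (A - B)ᵀ * B‖ := by
        rw [Matrix.mul_sub, transpose_sub, Matrix.sub_mul, sub_add_sub_cancel]
    _ ≤ ‖Aᵀ‖ * ‖A - B‖ + ‖(A - B)ᵀ‖ * ‖B‖ :=
        (norm_add_le _ _).trans (add_le_add (frobenius_norm_mul _ _) (frobenius_norm_mul _ _))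
    _ = (‖A‖ + ‖B‖) * ‖A - B‖ := by
        rw [frobenius_norm_transpose, frobenius_norm_transpose]; ring

end Frobenius

theorem transpose_mul_self_orthogonal_mul {m n : Type*} [Fintype m] [DecidableEq m]
    (Q : orthogonalGroup m ℝ) (A : Matrix m n ℝ) :
    ((Q : Matrix m m ℝ) * A)ᵀ * ((Q : Matrix m m ℝ) * A) = Aᵀ * A := by
  have hQ : (Q : Matrix m m ℝ)ᵀ * Q = 1 := Q.prop.1
  rw [transpose_mul, Matrix.mul_assoc, ← Matrix.mul_assoc _ _ A, hQ, Matrix.one_mul]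

theorem frobenius_norm_orthogonal_mul {m n : Type*} [Fintype m] [DecidableEq m] [Fintype n]
    (Q : orthogonalGroup m ℝ) (A : Matrix m n ℝ) :
    ‖(Q : Matrix m m ℝ) * A‖ = ‖A‖ := by
  refine (pow_left_inj₀ (norm_nonneg _) (norm_nonneg _) two_ne_zero).1 ?_
  rw [frobenius_norm_sq_eq_trace, frobenius_norm_sq_eq_trace, transpose_mul_self_orthogonal_mul]

section Tuples

variable {m n : Fin L → ℕ}

theorem fnorm_eq_sqrt_sum_norm_sq (X : ∀ ℓ : Fin L, Matrix (Fin (m ℓ)) (Fin (n ℓ)) ℝ) :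
    fnorm X = √(∑ ℓ, ‖X ℓ‖ ^ 2) := by
  simp only [fnorm, frobenius_norm_sq_eq_sum_sq]

theorem fnorm_eq_norm_toLp (X : ∀ ℓ : Fin L, Matrix (Fin (m ℓ)) (Fin (n ℓ)) ℝ) :
    fnorm X = ‖WithLp.toLp 2 X‖ := by
  rw [PiLp.norm_eq_of_L2, fnorm_eq_sqrt_sum_norm_sq]

theorem fnorm_nonneg (X : ∀ ℓ : Fin L, Matrix (Fin (m ℓ)) (Fin (n ℓ)) ℝ) : 0 ≤ fnorm X :=
  Real.sqrt_nonneg _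

theorem fnorm_le_fnorm_add_fnorm_sub (X Y : ∀ ℓ : Fin L, Matrix (Fin (m ℓ)) (Fin (n ℓ)) ℝ) :
    fnorm X ≤ fnorm Y + fnorm (X - Y) := by
  simp only [fnorm_eq_norm_toLp, WithLp.toLp_sub]
  exact norm_le_insert' _ _

theorem norm_le_fnorm (X : ∀ ℓ : Fin L, Matrix (Fin (m ℓ)) (Fin (n ℓ)) ℝ) (ℓ : Fin L) :
    ‖X ℓ‖ ≤ fnorm X := by
  rw [fnorm_eq_norm_toLp]
  exact PiLp.norm_apply_le (WithLp.toLp 2 X) ℓ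

theorem fnorm_le_mul_of_forall_norm_le {m' n' : Fin L → ℕ}
    (A : ∀ ℓ : Fin L, Matrix (Fin (m ℓ)) (Fin (n ℓ)) ℝ)
    (B : ∀ ℓ : Fin L, Matrix (Fin (m' ℓ)) (Fin (n' ℓ)) ℝ) {C : ℝ} (hC : 0 ≤ C)
    (h : ∀ ℓ, ‖A ℓ‖ ≤ C * ‖B ℓ‖) : fnorm A ≤ C * fnorm B := by
  rw [fnorm_eq_sqrt_sum_norm_sq, fnorm_eq_sqrt_sum_norm_sq, ← Real.sqrt_sq hC,
    ← Real.sqrt_mul (sq_nonneg C), Finset.mul_sum]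
  gcongr with ℓ
  rw [← mul_pow]
  exact pow_le_pow_left₀ (norm_nonneg _) (h ℓ) 2

end Tuples

theorem gram_act (Q : HGroup N) (X : V N R) : gram (act Q X) = gram X :=
  funext fun ℓ => transpose_mul_self_orthogonal_mul (Q ℓ) (X ℓ)

theorem fnorm_act (Q : HGroup N) (X : V N R) : fnorm (act Q X) = fnorm X := by
  simp only [fnorm_eq_sqrt_sum_norm_sq, act, frobenius_norm_orthogonal_mul]

theorem fnorm_gram_sub_le (X Y : V N R) :
    fnorm (gram X - gram Y) ≤ (fnorm X + fnorm Y) * fnorm (X - Y) :=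
  fnorm_le_mul_of_forall_norm_le _ _ (add_nonneg (fnorm_nonneg X) (fnorm_nonneg Y)) fun ℓ =>
    (frobenius_norm_transpose_mul_self_sub_le (X ℓ) (Y ℓ)).trans <|
      mul_le_mul_of_nonneg_right (add_le_add (norm_le_fnorm X ℓ) (norm_le_fnorm Y ℓ)) (norm_nonneg _)

theorem gram_diff_le_dH_general
    (L : ℕ) (N R : Fin L → ℕ)
    (X₀ : V N R) (r : ℝ)
    (X Y : V N R) (hX : fnorm (X - X₀) ≤ r) (hY : fnorm (Y - X₀) ≤ r) :
    fnorm (gram X - gram Y) ≤ 2 * (fnorm X₀ + r) * dH X Y := by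
  have hXb := fnorm_le_fnorm_add_fnorm_sub X X₀
  have hYb := fnorm_le_fnorm_add_fnorm_sub Y X₀
  have hC : 0 ≤ 2 * (fnorm X₀ + r) := by linarith [fnorm_nonneg X₀, fnorm_nonneg (X - X₀)]
  rw [dH, Real.mul_iInf_of_nonneg hC]
  refine le_ciInf fun Q => ?_
  calc fnorm (gram X - gram Y) = fnorm (gram X - gram (act Q Y)) := by rw [gram_act]
    _ ≤ (fnorm X + fnorm (act Q Y)) * fnorm (X - act Q Y) := fnorm_gram_sub_le X (act Q Y)
    _ ≤ 2 * (fnorm X₀ + r) * fnorm (X - act Q Y) := by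
        rw [fnorm_act]
        gcongr
        · exact fnorm_nonneg _
        · linarith

/-- For `X, Y` in the ball of radius `r` around `X₀`,
`d_Gram(X,Y)² = ‖XᵀX − YᵀY‖ ≤ 2(‖X₀‖ + r)·d_H(X,Y)`. -/
theorem gram_diff_le_dH
    (L : ℕ) (hL : 0 < L) (N R : Fin L → ℕ) (hN : ∀ ℓ, 0 < N ℓ) (hR : ∀ ℓ, 0 < R ℓ)
    (X₀ : V N R) (r : ℝ) (hr : 0 < r)
    (X Y : V N R) (hX : fnorm (X - X₀) ≤ r) (hY : fnorm (Y - X₀) ≤ r) :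
    fnorm (gram X - gram Y) ≤ 2 * (fnorm X₀ + r) * dH X Y :=
  gram_diff_le_dH_general L N R X₀ r X Y hX hY

end GPR
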